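/- Define G(x) := (1/(4π)) log(2cosh(2πx₂) − 2cos(2πx₁)) for x = (x₁,x₂) ∈ ℝ² ∖ L. Then G is differentiable on ℝ² ∖ L and its perpendicular gradient ∇^⊥G(x) := (−∂G/∂x₂(x), ∂G/∂x₁(x)) equals K_∞(x); moreover K_∞(x) = (1/2)·(vec(cot(π·conj(⟵x))))^⊥. -/

import Mathlib

/-- Identify `ℂ` with `ℝ²` via `vec (a + b i) = (a, b)`. -/
def vec (z : ℂ) : ℝ × ℝ := (z.re, z.im)

/-- Counterclockwise rotation by 90 degrees: `(v₁, v₂)^⊥ = (-v₂, v₁)`. -/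
def perp (v : ℝ × ℝ) : ℝ × ℝ := (-v.2, v.1)

/-- Identify `ℝ²` with `ℂ`: `⟵(x₁, x₂) = x₁ + i x₂`. -/
noncomputable def toC (x : ℝ × ℝ) : ℂ := x.1 + x.2 * Complex.I

/-- The periodic Biot–Savart kernel
`K_∞ x = (-sinh(2πx₂), sin(2πx₁)) / (2(cosh(2πx₂) - cos(2πx₁)))` on `ℝ² \ L`. -/
noncomputable def Kinf (x : ℝ × ℝ) : ℝ × ℝ :=
  (2 * (Real.cosh (2 * Real.pi * x.2) - Real.cos (2 * Real.pi * x.1)))⁻¹ •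
    (-Real.sinh (2 * Real.pi * x.2), Real.sin (2 * Real.pi * x.1))

/-- The Green's function `G x = (1/(4π)) log(2 cosh(2πx₂) - 2 cos(2πx₁))`. -/
noncomputable def G (x : ℝ × ℝ) : ℝ :=
  (4 * Real.pi)⁻¹ * Real.log (2 * Real.cosh (2 * Real.pi * x.2) - 2 * Real.cos (2 * Real.pi * x.1))

/-! For `z = a + b i`, `cosh (2b) - cos (2a) = 2 sin z · sin z̄ = 2 |sin z|²`, which vanishes exactly
at the zeros `π ℤ` of `sin`: so the argument of the `log` in `G` is positive off `L`, and `∇^⊥ G` follows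
from the chain rule. For the cotangent, `cot z = cos z · sin z̄ / (sin z · sin z̄)`, and the
product-to-sum formulas turn the numerator into `(sin (2a) - i sinh (2b)) / 2`. -/

open Real ComplexConjugate

theorem cos_two_pi_mul_lt_cosh_two_pi_mul {x : ℝ × ℝ} (hx : ∀ n : ℤ, x ≠ ((n : ℝ), 0)) :
    cos (2 * π * x.1) < cosh (2 * π * x.2) := by
  obtain ⟨a, b⟩ := x
  rcases eq_or_ne b 0 with rfl | hb
  · have hcos : cos (2 * π * a) ≠ 1 := fun h => by
      obtain ⟨n, hn⟩ := (cos_eq_one_iff _).mp h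
      exact hx n (by rw [show a = n by nlinarith [pi_pos]])
    simpa using (cos_le_one _).lt_of_ne hcos
  · exact (cos_le_one _).trans_lt (one_lt_cosh.mpr (by simp [pi_ne_zero, hb]))

theorem hasFDerivAt_G {x : ℝ × ℝ} (hx : ∀ n : ℤ, x ≠ ((n : ℝ), 0)) :
    HasFDerivAt G ((2 * (cosh (2 * π * x.2) - cos (2 * π * x.1)))⁻¹ •
      (sin (2 * π * x.1) • ContinuousLinearMap.fst ℝ ℝ ℝ
        + sinh (2 * π * x.2) • ContinuousLinearMap.snd ℝ ℝ ℝ)) x := by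
  have hlt := cos_two_pi_mul_lt_cosh_two_pi_mul hx
  have h := ((((hasFDerivAt_snd (p := x)).const_mul (2 * π)).cosh.const_mul 2).sub
    (((hasFDerivAt_fst (p := x)).const_mul (2 * π)).cos.const_mul 2)).log
    (by rw [Pi.sub_apply]; exact (by linarith : (0 : ℝ) < _).ne') |>.const_mul (4 * π)⁻¹
  refine h.congr_fderiv ?_
  ext <;> simp <;> field_simp <;> ring

theorem Complex.cot_ofReal_add_ofReal_mul_I (u v : ℝ) :
    cot (u + v * I) =
      (↑(Real.sin (2 * u)) - ↑(Real.sinh (2 * v)) * I) / ↑(Real.cosh (2 * v) - Real.cos (2 * u)) := by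
  set z : ℂ := u + v * I
  have hconj : conj z = u - v * I := by simp [z, sub_eq_add_neg]
  have hnum : cos z * sin (conj z) = (↑(Real.sin (2 * u)) - ↑(Real.sinh (2 * v)) * I) / 2 := by
    rw [hconj]
    push_cast
    rw [cos_add, sin_sub, cos_mul_I, sin_mul_I, sin_two_mul, sinh_two_mul]
    linear_combination sin u * cos u * cosh_sq_sub_sinh_sq (v : ℂ)
      - sinh v * cosh v * I * sin_sq_add_cos_sq (u : ℂ) + cos u * sin u * sinh v ^ 2 * I_sq
  have hden : sin z * sin (conj z) = ↑(Real.cosh (2 * v) - Real.cos (2 * u)) / 2 := by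
    rw [hconj]
    push_cast
    rw [sin_add, sin_sub, cos_mul_I, sin_mul_I, cos_two_mul, cosh_two_mul]
    linear_combination (sin u ^ 2 - 1 / 2) * cosh_sq_sub_sinh_sq (v : ℂ)
      + (sinh v ^ 2 + 1) * sin_sq_add_cos_sq (u : ℂ) - cos u ^ 2 * sinh v ^ 2 * I_sq
  rw [cot_eq_cos_div_sin]
  by_cases hs : sin z = 0
  · -- both sides take the junk value `_ / 0 = 0`
    rw [hs, zero_mul] at hden
    have hD : ((Real.cosh (2 * v) - Real.cos (2 * u) : ℝ) : ℂ) = 0 := by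
      linear_combination -2 * hden
    rw [hs, div_zero, hD, div_zero]
  · have hs' : sin (conj z) ≠ 0 := by rwa [sin_conj, map_ne_zero]
    rw [← mul_div_mul_right _ _ hs', hnum, hden, div_div_div_cancel_right₀ two_ne_zero]

theorem Kinf_eq_half_perp_vec_cot (x : ℝ × ℝ) :
    Kinf x = (1/2 : ℝ) • perp (vec (Complex.cot (π * conj (toC x)))) := by
  have hz : (π : ℂ) * conj (toC x) = ↑(π * x.1) + ↑(-(π * x.2)) * Complex.I := by
    simp only [toC, map_add, map_mul, Complex.conj_ofReal, Complex.conj_I]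
    push_cast
    ring
  rw [hz, Complex.cot_ofReal_add_ofReal_mul_I]
  simp only [mul_neg, sinh_neg, cosh_neg, ← mul_assoc, vec, perp, Kinf,
    Complex.div_ofReal_re, Complex.div_ofReal_im, Complex.sub_re, Complex.sub_im,
    Complex.ofReal_re, Complex.ofReal_im, Complex.re_ofReal_mul, Complex.im_ofReal_mul,
    Complex.I_re, Complex.I_im, Prod.smul_mk, smul_eq_mul, mul_inv]
  congr 1 <;> ring

/-- On `ℝ² \ L`, `G` is differentiable with `∇^⊥ G = K_∞`, and moreover
`K_∞ x = (1/2) (vec (cot (π conj (⟵x))))^⊥`. -/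
theorem stmt12 (x : ℝ × ℝ) (hx : ∀ n : ℤ, x ≠ ((n : ℝ), 0)) :
    DifferentiableAt ℝ G x ∧
    (-(fderiv ℝ G x (0, 1)), fderiv ℝ G x (1, 0)) = Kinf x ∧
    Kinf x = (1/2 : ℝ) • perp (vec (Complex.cot (Real.pi * (starRingEnd ℂ) (toC x)))) := by
  have hG := hasFDerivAt_G hx
  refine ⟨hG.differentiableAt, ?_, Kinf_eq_half_perp_vec_cot x⟩
  simp [hG.fderiv, Kinf]
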